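/- If the 3CM M halts, then for every X ∈ {O, SO, R, E} and every instance I, every fair X-derivation from the knowledge base ⟨R_M, I⟩ is finite (i.e., the X-chase terminates on ⟨R_M, I⟩ for all instances I). -/

import Mathlib

set_option maxHeartbeats 1000000
set_option synthInstance.maxHeartbeats 1000000
set_option synthInstance.maxSize 512

attribute [local instance] Classical.propDecidable

noncomputable section

/-! ### Terms and atoms -/

/-- Variables: ordinary variables `Sum.inl n`, or fresh variables `Sum.inr (c, k)`
introduced by the trigger with code `c` for the head variable with code `k`. -/
abbrev Var : Type := ℕ ⊕ (ℕ × ℕ)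

/-- Terms: constants `Sum.inl c` or variables `Sum.inr v`. -/
abbrev FTerm : Type := ℕ ⊕ Var

def ct (n : ℕ) : FTerm := Sum.inl n
def vt (n : ℕ) : FTerm := Sum.inr (Sum.inl n)

/-- An atom: a predicate name together with its list of arguments. -/
abbrev Atom : Type := ℕ × List FTerm

/-- Active domain: all terms occurring in an atom set. -/
def adom (J : Set Atom) : Set FTerm := {t | ∃ a ∈ J, t ∈ a.2}

def atomVarsF (a : Atom) : Finset Var := (a.2.filterMap Sum.getRight?).toFinset

def varsF (A : Finset Atom) : Finset Var := A.biUnion atomVarsF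

def setVars (J : Set Atom) : Set Var := {v | ∃ a ∈ J, Sum.inr v ∈ a.2}

/-! ### Substitutions and homomorphisms -/

abbrev Subst := Var → FTerm

def applyT (σ : Subst) : FTerm → FTerm
  | Sum.inl c => Sum.inl c
  | Sum.inr v => σ v

def applyA (σ : Subst) (a : Atom) : Atom := (a.1, a.2.map (applyT σ))

def IsHomOn (σ : Subst) (A B : Set Atom) : Prop := ∀ a ∈ A, applyA σ a ∈ B

def HomBetween (A B : Set Atom) : Prop := ∃ σ : Subst, IsHomOn σ A B

def IsRetraction (σ : Subst) (A B : Set Atom) : Prop :=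
  IsHomOn σ A B ∧ ∀ v ∈ setVars A ∩ setVars B, σ v = Sum.inr v

/-- Isomorphism of atom sets: a pair of mutually inverse homomorphisms. -/
def Isomorphic (A B : Set Atom) : Prop :=
  ∃ σ τ : Subst, IsHomOn σ A B ∧ IsHomOn τ B A ∧
    (∀ a ∈ A, applyA τ (applyA σ a) = a) ∧ (∀ b ∈ B, applyA σ (applyA τ b) = b)

/-! ### Rules -/

/-- A rule is a pair (body, head). Its existential variables are the head variables
not occurring in the body; its frontier the variables shared by body and head.
A rule is Datalog when every head variable occurs in the body. -/
abbrev Rule : Type := Finset Atom × Finset Atom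

def frontierOf (R : Rule) : Finset Var := varsF R.1 ∩ varsF R.2

def DatRules (Rset : Finset Rule) : Finset Rule := Rset.filter fun R => varsF R.2 ⊆ varsF R.1
def NDatRules (Rset : Finset Rule) : Finset Rule := Rset.filter fun R => ¬ varsF R.2 ⊆ varsF R.1

/-- Satisfaction of a rule in an atom set. -/
def SatisfiesRule (J : Set Atom) (R : Rule) : Prop :=
  ∀ σ : Subst, IsHomOn σ (R.1 : Set Atom) J →
    ∃ σ' : Subst, (∀ v ∈ varsF R.1, σ' v = σ v) ∧ IsHomOn σ' (R.2 : Set Atom) J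

def IsModel (Rset : Finset Rule) (I J : Set Atom) : Prop :=
  (∀ R ∈ Rset, SatisfiesRule J R) ∧ HomBetween I J

/-- BCQ entailment: every model of the KB satisfies the query. -/
def Entails (Rset : Finset Rule) (I q : Set Atom) : Prop :=
  ∀ J : Set Atom, IsModel Rset I J → HomBetween q J

def IsUniversalModel (Rset : Finset Rule) (I U : Set Atom) : Prop :=
  IsModel Rset I U ∧ ∀ J : Set Atom, IsModel Rset I J → HomBetween U J

/-! ### Triggers -/

structure Trigger where
  rule : Rule
  sub : Subst

/-- Injective code of a trigger (a trigger is determined by its rule and the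
restriction of its substitution to the body variables). -/
def Trigger.code (t : Trigger) : ℕ :=
  Encodable.encode (t.rule, (varsF t.rule.1).image fun v => (v, t.sub v))

/-- The canonical extension of the trigger substitution, mapping each existential
variable `z` to the fresh variable unique for `z` and the trigger. -/
def Trigger.extSub (t : Trigger) : Subst := fun v =>
  if v ∈ varsF t.rule.1 then t.sub v
  else Sum.inr (Sum.inr (t.code, Encodable.encode v))

def Trigger.out (t : Trigger) : Finset Atom := t.rule.2.image (applyA t.extSub)

def Trigger.isOn (t : Trigger) (J : Set Atom) : Prop := IsHomOn t.sub (t.rule.1 : Set Atom) J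

/-! ### Chase variants, derivations, chase termination classes -/

inductive ChaseVariant : Type
  | O | SO | R | E
deriving DecidableEq

def Applicable : ChaseVariant → Trigger → Set Atom → Prop
  | .O, t, J => ¬ ((t.out : Set Atom) ⊆ J)
  | .SO, t, J => ∀ t' : Trigger, t'.rule = t.rule → t'.isOn J →
      (∀ v ∈ frontierOf t.rule, t'.sub v = t.sub v) → ¬ ((t'.out : Set Atom) ⊆ J)
  | .R, t, J => ¬ ∃ σ : Subst, IsRetraction σ (J ∪ (t.out : Set Atom)) J
  | .E, t, J => ¬ ∃ σ : Subst, IsHomOn σ (J ∪ (t.out : Set Atom)) J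

def instSeq (I : Set Atom) (steps : ℕ → Option Trigger) : ℕ → Set Atom
  | 0 => I
  | n + 1 => instSeq I steps n ∪
      (match steps n with
        | none => (∅ : Set Atom)
        | some t => (t.out : Set Atom))

/-- A (possibly infinite) derivation from the knowledge base `⟨Rset, I⟩`. -/
structure Deriv (Rset : Finset Rule) (I : Set Atom) where
  steps : ℕ → Option Trigger
  prefix_closed : ∀ n, steps n = none → steps (n + 1) = none
  valid : ∀ n t, steps n = some t →
    t.rule ∈ Rset ∧ t.isOn (instSeq I steps n) ∧ ¬ ((t.out : Set Atom) ⊆ instSeq I steps n)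

def Deriv.inst {Rset : Finset Rule} {I : Set Atom} (D : Deriv Rset I) (n : ℕ) :
    Set Atom := instSeq I D.steps n

def Deriv.res {Rset : Finset Rule} {I : Set Atom} (D : Deriv Rset I) : Set Atom :=
  ⋃ n, D.inst n

def Deriv.Finite {Rset : Finset Rule} {I : Set Atom} (D : Deriv Rset I) : Prop :=
  ∃ n, D.steps n = none

def Deriv.IsX {Rset : Finset Rule} {I : Set Atom} (X : ChaseVariant)
    (D : Deriv Rset I) : Prop :=
  ∀ n t, D.steps n = some t → Applicable X t (D.inst n)

def Deriv.Fair {Rset : Finset Rule} {I : Set Atom} (X : ChaseVariant)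
    (D : Deriv Rset I) : Prop :=
  ∀ i, ∀ t : Trigger, t.rule ∈ Rset → t.isOn (D.inst i) → Applicable X t (D.inst i) →
    ∃ j, i < j ∧ ¬ Applicable X t (D.inst j)

/-- All-instance, all-derivation chase termination. -/
def CTall (X : ChaseVariant) (Rset : Finset Rule) : Prop :=
  ∀ I : Finset Atom, ∀ D : Deriv Rset (I : Set Atom), D.IsX X → D.Fair X → D.Finite

/-- All-instance, some-derivation chase termination. -/
def CTex (X : ChaseVariant) (Rset : Finset Rule) : Prop :=
  ∀ I : Finset Atom, ∃ D : Deriv Rset (I : Set Atom), D.IsX X ∧ D.Fair X ∧ D.Finite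

inductive CTQuant : Type
  | all | ex

def CT (X : ChaseVariant) : CTQuant → Finset Rule → Prop
  | .all => CTall X
  | .ex => CTex X

/-- The result of some fair `X`-derivation from `⟨Rset, J⟩`. -/
def ChX (X : ChaseVariant) (Rset : Finset Rule) (J : Set Atom) : Set Atom :=
  if h : ∃ D : Deriv Rset J, D.IsX X ∧ D.Fair X then h.choose.res else J

/-! ### Gaifman graph, treewidth, bts -/

def gaifmanAdj (J : Set Atom) (u v : FTerm) : Prop :=
  u ≠ v ∧ ∃ a ∈ J, u ∈ a.2 ∧ v ∈ a.2

/-- The (Gaifman graph of the) atom set `J` has treewidth at most `k`: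
there is a tree decomposition all of whose bags have size at most `k + 1`. -/
def TreewidthAtMost (J : Set Atom) (k : ℕ) : Prop :=
  ∃ (ι : Type) (T : SimpleGraph ι) (bag : ι → Finset FTerm),
    T.Connected ∧ T.IsAcyclic ∧
    (∀ v ∈ adom J, ∃ i, v ∈ bag i) ∧
    (∀ u v : FTerm, gaifmanAdj J u v → ∃ i, u ∈ bag i ∧ v ∈ bag i) ∧
    (∀ v : FTerm, (SimpleGraph.induce {i | v ∈ bag i} T).Preconnected) ∧
    (∀ i, (bag i).card ≤ k + 1)

/-- Bounded-treewidth sets: for every instance, some universal model of bounded treewidth. -/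
def IsBts (Rset : Finset Rule) : Prop :=
  ∀ I : Finset Atom, ∃ (k : ℕ) (U : Set Atom),
    IsUniversalModel Rset (I : Set Atom) U ∧ TreewidthAtMost U k

/-! ### Three-counter machines -/

/-- A three-counter machine: states `0, …, m − 1` (state `0` is initial, standing for `q₁`),
and a partial transition function given by a finite table. -/
structure TCM where
  m : ℕ
  hm : 0 < m
  δ : List ((ℕ × Bool × Bool) × (ℕ × Int × Int))
  keys_nodup : (δ.map Prod.fst).Nodup
  wf : ∀ e ∈ δ, e.1.1 < m ∧ e.2.1 < m ∧ e.2.2.1.natAbs ≤ 1 ∧ e.2.2.2.natAbs ≤ 1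

/-- A configuration: state, two counters, and the time counter. -/
abbrev Config : Type := ℕ × ℕ × ℕ × ℕ

def TCM.step (M : TCM) (q : ℕ) (b1 b2 : Bool) : Option (ℕ × Int × Int) :=
  (M.δ.find? fun e => decide (e.1 = (q, b1, b2))).map Prod.snd

def TCM.next (M : TCM) (C : Config) : Option Config :=
  match M.step C.1 (decide (C.2.1 ≠ 0)) (decide (C.2.2.1 ≠ 0)) with
  | none => none
  | some (q', d1, d2) =>
      some (q', ((C.2.1 : ℤ) + d1).toNat, ((C.2.2.1 : ℤ) + d2).toNat, C.2.2.2 + 1)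

def TCM.run (M : TCM) : ℕ → Option Config
  | 0 => some (0, 0, 0, 0)
  | n + 1 => (M.run n).bind M.next

/-- The machine halts: some reachable configuration has no successor. -/
def TCM.Halts (M : TCM) : Prop := ∃ n C, M.run n = some C ∧ M.next C = none

/-! ### Prime encoding of configurations -/

/-- The least prime strictly greater than `n` (computably). -/
def nextPrime (n : ℕ) : ℕ := Nat.find (Nat.exists_infinite_primes (n + 1))

/-- `prm i` is the `(i+1)`-st prime `p_{i+1}`, i.e. `prm 0 = 2`. -/
def prm : ℕ → ℕ
  | 0 => 2
  | k + 1 => nextPrime (prm k)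

/-- Encoding of a configuration as a natural number. -/
def TCM.enc (M : TCM) (C : Config) : ℕ :=
  prm C.1 * prm M.m ^ C.2.1 * prm (M.m + 1) ^ C.2.2.1 * prm (M.m + 2) ^ C.2.2.2

/-- `p = p₁ ⋯ p_{m+3}`. -/
def TCM.p (M : TCM) : ℕ := ∏ i ∈ Finset.range (M.m + 3), prm i

/-- Decode the state from a residue modulo `M.p`. -/
def TCM.stateOf (M : TCM) (i : ℕ) : Option ℕ :=
  (List.range M.m).find? fun s => decide (prm s ∣ i)

/-- The canonical pair `(q_i, r_i)` realizing the prime encoding of the transitions. -/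
def TCM.qr (M : TCM) (i : ℕ) : ℕ × ℕ :=
  match M.stateOf i with
  | none => (1, 1)
  | some s =>
      let b1 : Bool := decide (prm M.m ∣ i)
      let b2 : Bool := decide (prm (M.m + 1) ∣ i)
      match M.step s b1 b2 with
      | none => (1, 1)
      | some (s', d1, d2) =>
          let e1 : ℤ := if b1 then d1 else max d1 0
          let e2 : ℤ := if b2 then d2 else max d2 0
          let num : ℕ := prm s' * prm (M.m + 2) *
            (if e1 = 1 then prm M.m else 1) * (if e2 = 1 then prm (M.m + 1) else 1)
          let den : ℕ := prm s *
            (if e1 = -1 then prm M.m else 1) * (if e2 = -1 then prm (M.m + 1) else 1)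
          (num / Nat.gcd num den, den / Nat.gcd num den)

def TCM.qi (M : TCM) (i : ℕ) : ℕ := (M.qr i).1
def TCM.ri (M : TCM) (i : ℕ) : ℕ := (M.qr i).2

/-- `g(n) = q_{n mod p} · n / r_{n mod p}`. -/
def TCM.g (M : TCM) (n : ℕ) : ℕ := M.qi (n % M.p) * n / M.ri (n % M.p)

/-- `gᵏ(2)`. -/
def TCM.gIter (M : TCM) (k : ℕ) : ℕ := (M.g)^[k] 2

/-- `G = {gᵏ(2) : k ∈ ℕ}`. -/
def TCM.Gset (M : TCM) : Set ℕ := Set.range M.gIter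

/-! ### The rule set `R_M` -/

def pEnd : ℕ := 0
def pFlood : ℕ := 1
def pS0 : ℕ := 2
def pS : ℕ := 3
def pG : ℕ := 4
def pR (i : ℕ) : ℕ := 5 + 2 * i
def pT (i : ℕ) : ℕ := 6 + 2 * i

/-- `j`-th vertex of an `S`-path of length `n` from variable `a` to variable `b`
with fresh intermediate variables `base + 1, …, base + n − 1`. -/
def pathVar (a b base n j : ℕ) : FTerm :=
  if j = 0 then vt a else if j = n then vt b else vt (base + j)

/-- The atoms of `Sⁿ(x_a, x_b)`: an `S`-path of length `n`. -/
def spath (a b base n : ℕ) : Finset Atom :=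
  (Finset.range n).image fun j =>
    (pS, [pathVar a b base n j, pathVar a b base n (j + 1)])

/-- Rule (1): `S₀(x,y) → S(x,y)`. -/
def ruleS : Rule := ({(pS0, [vt 0, vt 1])}, {(pS, [vt 0, vt 1])})

/-- Rule (2): `R_i(x,y) ∧ S(y,z) → R_{i+1}(x,z)` (indices modulo `p`). -/
def ruleR (M : TCM) (i : ℕ) : Rule :=
  ({(pR i, [vt 0, vt 1]), (pS, [vt 1, vt 2])}, {(pR ((i + 1) % M.p), [vt 0, vt 2])})

/-- Rule (3): `T_i(x,y,z) ∧ S^{r_i}(y,y′) ∧ S^{q_i}(z,z′) → T_i(x,y′,z′)`. -/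
def ruleT (M : TCM) (i : ℕ) : Rule :=
  (({(pT i, [vt 0, vt 1, vt 2])} : Finset Atom) ∪ spath 1 3 10 (M.ri i) ∪
      spath 2 4 (11 + M.ri i) (M.qi i),
    {(pT i, [vt 0, vt 3, vt 4])})

/-- Rule (4): `S(x,y) → Flood(y)`. -/
def ruleFloodProp : Rule := ({(pS, [vt 0, vt 1])}, {(pFlood, [vt 1])})

/-- Rule (5): `End(x) → S(x,x)`. -/
def ruleSEnd : Rule := ({(pEnd, [vt 0])}, {(pS, [vt 0, vt 0])})

/-- Rule (6): `S²(x,y) → G(x,y)`. -/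
def ruleGInit : Rule := (spath 0 1 10 2, {(pG, [vt 0, vt 1])})

/-- Rule (7): `G(x,y) ∧ R_i(x,y) ∧ T_i(x,y,z) → G(x,z)`. -/
def ruleGStep (i : ℕ) : Rule :=
  ({(pG, [vt 0, vt 1]), (pR i, [vt 0, vt 1]), (pT i, [vt 0, vt 1, vt 2])},
    {(pG, [vt 0, vt 2])})

/-- Rule (8): `Flood(x) ∧ Flood(y) ∧ Flood(z) → G(x,y) ∧ ⋀_{j<p} (R_j(x,y) ∧ T_j(x,y,z))`. -/
def ruleFloodGen (M : TCM) : Rule :=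
  ({(pFlood, [vt 0]), (pFlood, [vt 1]), (pFlood, [vt 2])},
    ({(pG, [vt 0, vt 1])} : Finset Atom) ∪
      (Finset.range M.p).biUnion fun j =>
        {(pR j, [vt 0, vt 1]), (pT j, [vt 0, vt 1, vt 2])})

/-- Rule (9): `G(y,z) ∧ End(z) → ∃x (S₀(x,y) ∧ R₀(x,x) ∧ ⋀_{j<p} T_j(x,x,x))`. -/
def ruleEx (M : TCM) : Rule :=
  ({(pG, [vt 1, vt 2]), (pEnd, [vt 2])},
    ({(pS0, [vt 0, vt 1]), (pR 0, [vt 0, vt 0])} : Finset Atom) ∪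
      (Finset.range M.p).biUnion fun j => {(pT j, [vt 0, vt 0, vt 0])})

/-- The rule set `R_M`. -/
def RM (M : TCM) : Finset Rule :=
  ({ruleS, ruleFloodProp, ruleSEnd, ruleGInit, ruleFloodGen M, ruleEx M} : Finset Rule) ∪
    (Finset.range M.p).biUnion fun i => {ruleR M i, ruleT M i, ruleGStep i}

/-- The alternating Datalog/non-Datalog chase steps `Step^X_n`. -/
def StepX (X : ChaseVariant) (M : TCM) : ℕ → Set Atom → Set Atom
  | 0, I => ChX X (DatRules (RM M)) I
  | n + 1, I => ChX X (DatRules (RM M)) (ChX X (NDatRules (RM M)) (StepX X M n I))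

/-- The constant `w`, the "well of positivity". -/
def wC : FTerm := ct 0

/-- The instance `{End(w)}`. -/
def IE : Set Atom := {(pEnd, [wC])}

/-- Membership in the signature of `R_M` (predicate together with its arity). -/
def InSig (M : TCM) (a : Atom) : Prop :=
  ((a.1 = pEnd ∨ a.1 = pFlood) ∧ a.2.length = 1) ∨
  ((a.1 = pS0 ∨ a.1 = pS ∨ a.1 = pG ∨ ∃ i < M.p, a.1 = pR i) ∧ a.2.length = 2) ∨
  ((∃ i < M.p, a.1 = pT i) ∧ a.2.length = 3)

/-- The critical instance: all atoms `P(w, …, w)` over the signature of `R_M`. -/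
def Crit (M : TCM) : Set Atom := {a | InSig M a ∧ ∀ t ∈ a.2, t = wC}

/-- An `S`-path of length `k` from `s` to `t` in `J`. -/
def SPath (J : Set Atom) : ℕ → FTerm → FTerm → Prop
  | 0, s, t => s = t
  | k + 1, s, t => ∃ u, (pS, [s, u]) ∈ J ∧ SPath J k u t

/-- The restriction `J|_S`: atoms of `J` all of whose terms belong to `S`. -/
def restrictTo (J : Set Atom) (S : Set FTerm) : Set Atom := {a ∈ J | ∀ t ∈ a.2, t ∈ S}

/-- An explicit injective encoding of three-counter machines by natural numbers. -/
def encodeTCM (M : TCM) : ℕ := Encodable.encode (M.m, M.δ)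

/-!
A derivation adds a new atom at every step and only ever adds atoms of the oblivious chase
`RM.chase M I`, so it suffices that this chase is finite when `M` halts.

Its terms are those of `I` and the nulls `x` that rule (9) creates from `G(y, z)` and `End(z)`,
with `S₀(x, y)`; call `y` the parent of `x`. At a null `x` of large height the rules simulate
`g`: `R_i(x, u)` and `T_i(x, u, v)` record `S`-walks from `x` of lengths `≡ i (mod p)`,
resp. `c · r_i` and `c · q_i`, and since these walks can only descend the parent chain,
rule (7) turns `G(x, y)` with `y` at distance `gᵏ(2)` into `G(x, z)` with `z` at distance
`gᵏ⁺¹(2)`. Moreover no `S`-edge enters `x`, so rule (8) never fires at `x`. If `M` halts, the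
values `gᵏ(2)` are bounded, so `G(x, z)` never reaches a term `z` of `I` carrying `End`: rule (9)
only fires at bounded height. Hence the chase has finitely many terms, and finitely many atoms.
-/

lemma prm_prime (k : ℕ) : (prm k).Prime := by
  cases k with
  | zero => exact Nat.prime_two
  | succ k => exact (Nat.find_spec (Nat.exists_infinite_primes (prm k + 1))).2

lemma prm_strictMono : StrictMono prm :=
  strictMono_nat_of_lt_succ fun k => (Nat.find_spec (Nat.exists_infinite_primes (prm k + 1))).1

lemma prm_dvd_prm_iff {j l : ℕ} : prm j ∣ prm l ↔ j = l :=
  (Nat.prime_dvd_prime_iff_eq (prm_prime j) (prm_prime l)).trans prm_strictMono.injective.eq_iff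

lemma prm_dvd_prm_pow_iff {j l e : ℕ} : prm j ∣ prm l ^ e ↔ j = l ∧ 0 < e := by
  rcases Nat.eq_zero_or_pos e with rfl | he
  · simp [(prm_prime j).ne_one]
  · simp [he, prm_dvd_prm_iff.symm, (prm_prime j).prime.dvd_pow_iff_dvd he.ne']

lemma div_gcd_mul_div_eq_of_mul_eq {num den n n' : ℕ} (hden : 0 < den)
    (h : num * n = den * n') : num / num.gcd den * n / (den / num.gcd den) = n' := by
  have hγ : 0 < num.gcd den := Nat.gcd_pos_of_pos_right _ hden
  obtain ⟨a, ha⟩ := Nat.gcd_dvd_left num den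
  obtain ⟨b, hb⟩ := Nat.gcd_dvd_right num den
  generalize num.gcd den = γ at hγ ha hb ⊢
  subst ha hb
  have hb0 : 0 < b := Nat.pos_of_mul_pos_left hden
  rw [mul_assoc, mul_assoc] at h
  rw [Nat.mul_div_cancel_left _ hγ, Nat.mul_div_cancel_left _ hγ,
    Nat.eq_of_mul_eq_mul_left hγ h, Nat.mul_div_cancel_left _ hb0]

lemma div_gcd_pos {a b : ℕ} (ha : 0 < a) (hb : 0 < b) : 0 < a / a.gcd b ∧ 0 < b / a.gcd b :=
  ⟨Nat.div_pos (Nat.le_of_dvd ha (Nat.gcd_dvd_left a b)) (Nat.gcd_pos_of_pos_left b ha),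
    Nat.div_pos (Nat.le_of_dvd hb (Nat.gcd_dvd_right a b)) (Nat.gcd_pos_of_pos_left b ha)⟩

/-- One counter's share of `q_i · enc C = r_i · enc (next C)`; a counter at zero is never
decremented. -/
lemma counter_factor_eq (P v : ℕ) {d : ℤ} (hd : d.natAbs ≤ 1) :
    (if (if decide (v ≠ 0) then d else max d 0) = 1 then P else 1) * P ^ v =
      (if (if decide (v ≠ 0) then d else max d 0) = -1 then P else 1) *
        P ^ ((v : ℤ) + d).toNat := by
  rcases Nat.eq_zero_or_pos v with rfl | hv
  · rcases (by omega : d = -1 ∨ d = 0 ∨ d = 1) with rfl | rfl | rfl <;> simp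
  · rcases (by omega : d = -1 ∨ d = 0 ∨ d = 1) with rfl | rfl | rfl
    · obtain ⟨w, rfl⟩ := Nat.exists_eq_add_of_lt hv
      simp [pow_succ']
    · simp
    · simp [pow_succ']

namespace TCM

variable (M : TCM)

lemma prm_dvd_enc_iff (C : Config) {j : ℕ} :
    prm j ∣ M.enc C ↔ j = C.1 ∨ (j = M.m ∧ 0 < C.2.1) ∨ (j = M.m + 1 ∧ 0 < C.2.2.1) ∨
      (j = M.m + 2 ∧ 0 < C.2.2.2) := by
  have hp := prm_prime j
  rw [TCM.enc, hp.dvd_mul, hp.dvd_mul, hp.dvd_mul, prm_dvd_prm_iff, prm_dvd_prm_pow_iff,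
    prm_dvd_prm_pow_iff, prm_dvd_prm_pow_iff]
  tauto

lemma p_pos : 0 < M.p :=
  Finset.prod_pos fun i _ => (prm_prime i).pos

lemma prm_dvd_mod_p_iff {j : ℕ} (hj : j < M.m + 3) (n : ℕ) : prm j ∣ n % M.p ↔ prm j ∣ n :=
  Nat.dvd_mod_iff (Finset.dvd_prod_of_mem _ (Finset.mem_range.2 hj))

lemma stateOf_enc_mod_p {C : Config} (hC : C.1 < M.m) :
    M.stateOf (M.enc C % M.p) = some C.1 := by
  rw [TCM.stateOf, List.find?_eq_some_iff_getElem]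
  refine ⟨?_, C.1, by simpa using hC, by simp, fun j hj => ?_⟩
  · simp [M.prm_dvd_mod_p_iff (by omega : C.1 < M.m + 3), prm_dvd_enc_iff]
  · simp only [List.getElem_range, Bool.not_eq_true', decide_eq_false_iff_not,
      M.prm_dvd_mod_p_iff (by omega : j < M.m + 3), prm_dvd_enc_iff]
    omega

lemma decide_prm_dvd_enc_mod_p {C : Config} (hC : C.1 < M.m) {j : ℕ}
    (hj : j = M.m ∨ j = M.m + 1) :
    decide (prm j ∣ M.enc C % M.p) =
      decide (if j = M.m then C.2.1 ≠ 0 else C.2.2.1 ≠ 0) := by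
  simp only [decide_eq_decide, M.prm_dvd_mod_p_iff (by omega : j < M.m + 3), prm_dvd_enc_iff]
  split_ifs <;> omega

lemma step_spec {q : ℕ} {b1 b2 : Bool} {s' : ℕ} {d1 d2 : ℤ}
    (h : M.step q b1 b2 = some (s', d1, d2)) : s' < M.m ∧ d1.natAbs ≤ 1 ∧ d2.natAbs ≤ 1 := by
  obtain ⟨e, he, hse⟩ := Option.map_eq_some_iff.1 h
  simpa [hse] using (M.wf e (List.mem_of_find?_eq_some he)).2

lemma g_enc_of_next_eq_some {C C' : Config} (hC : C.1 < M.m) (h : M.next C = some C') :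
    M.g (M.enc C) = M.enc C' := by
  obtain ⟨q, v1, v2, t⟩ := C
  rw [TCM.next] at h
  split at h
  · simp at h
  rename_i s' d1 d2 hstep
  obtain rfl := Option.some_injective _ h
  obtain ⟨-, hd1, hd2⟩ := M.step_spec hstep
  rw [TCM.g, TCM.qi, TCM.ri, TCM.qr, M.stateOf_enc_mod_p hC,
    M.decide_prm_dvd_enc_mod_p hC (Or.inl rfl), M.decide_prm_dvd_enc_mod_p hC (Or.inr rfl)]
  simp only [if_true, show M.m + 1 ≠ M.m by omega, if_false, hstep]
  refine div_gcd_mul_div_eq_of_mul_eq (by split_ifs <;> simp [(prm_prime _).pos]) ?_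
  have h1 := counter_factor_eq (prm M.m) v1 hd1
  have h2 := counter_factor_eq (prm (M.m + 1)) v2 hd2
  simp only [TCM.enc]
  calc _ = ((if (if decide (v1 ≠ 0) then d1 else max d1 0) = 1 then prm M.m else 1) *
            prm M.m ^ v1) *
          ((if (if decide (v2 ≠ 0) then d2 else max d2 0) = 1 then prm (M.m + 1) else 1) *
            prm (M.m + 1) ^ v2) * (prm s' * prm q * prm (M.m + 2) ^ (t + 1)) := by ring
    _ = _ := by rw [h1, h2]; ring

lemma g_enc_of_next_eq_none {C : Config} (hC : C.1 < M.m) (h : M.next C = none) :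
    M.g (M.enc C) = M.enc C := by
  obtain ⟨q, v1, v2, t⟩ := C
  rw [TCM.next] at h
  split at h
  · rename_i hstep
    rw [TCM.g, TCM.qi, TCM.ri, TCM.qr, M.stateOf_enc_mod_p hC,
      M.decide_prm_dvd_enc_mod_p hC (Or.inl rfl), M.decide_prm_dvd_enc_mod_p hC (Or.inr rfl)]
    simp only [if_true, show M.m + 1 ≠ M.m by omega, if_false, hstep]
    simp
  · simp at h

lemma run_state_lt {n : ℕ} {C : Config} (h : M.run n = some C) : C.1 < M.m := by
  induction n generalizing C with
  | zero => cases h; exact M.hm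
  | succ n ih =>
    obtain ⟨C₀, -, hnext⟩ := Option.bind_eq_some_iff.1 h
    rw [TCM.next] at hnext
    split at hnext
    · simp at hnext
    · cases hnext
      exact (M.step_spec ‹_›).1

lemma gIter_eq_enc_run {n : ℕ} {C : Config} (h : M.run n = some C) : M.gIter n = M.enc C := by
  induction n generalizing C with
  | zero => cases h; simp [TCM.gIter, TCM.enc, prm]
  | succ n ih =>
    obtain ⟨C₀, h₀, hnext⟩ := Option.bind_eq_some_iff.1 h
    rw [TCM.gIter, Function.iterate_succ_apply', ← TCM.gIter, ih h₀,
      M.g_enc_of_next_eq_some (M.run_state_lt h₀) hnext]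

/-- Once the machine has halted, `g` is stuck at the code of the halting configuration. -/
lemma gIter_bddAbove (hM : M.Halts) : BddAbove (Set.range M.gIter) := by
  obtain ⟨n, C, hrun, hhalt⟩ := hM
  have hstuck : ∀ j, M.gIter (n + j) = M.gIter n := by
    intro j
    induction j with
    | zero => rfl
    | succ j ih =>
      rw [← add_assoc, TCM.gIter, Function.iterate_succ_apply', ← TCM.gIter, ih,
        M.gIter_eq_enc_run hrun, M.g_enc_of_next_eq_none (M.run_state_lt hrun) hhalt]
  refine ((Set.finite_Iic n).image M.gIter).bddAbove.mono ?_
  rintro _ ⟨k, rfl⟩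
  rcases le_or_gt k n with hk | hk
  · exact ⟨k, hk, rfl⟩
  · obtain ⟨j, rfl⟩ := Nat.exists_eq_add_of_lt hk
    exact ⟨n, Set.mem_Iic.2 le_rfl, by rw [add_assoc, hstuck]⟩

lemma qi_ri_pos (i : ℕ) : 0 < M.qi i ∧ 0 < M.ri i := by
  rw [TCM.qi, TCM.ri, TCM.qr]
  split
  · simp
  · dsimp only
    split
    · simp
    · exact div_gcd_pos (by split_ifs <;> simp [(prm_prime _).pos])
        (by split_ifs <;> simp [(prm_prime _).pos])

lemma gIter_succ_eq {k i c : ℕ} (hi : M.gIter k % M.p = i)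
    (hc : c * M.ri i = M.gIter k) : M.gIter (k + 1) = c * M.qi i := by
  rw [TCM.gIter, Function.iterate_succ_apply', ← TCM.gIter, TCM.g, hi, ← hc,
    show M.qi i * (c * M.ri i) = c * M.qi i * M.ri i by ring,
    Nat.mul_div_cancel _ (M.qi_ri_pos i).2]

end TCM

namespace Deriv

variable {Rset : Finset Rule} {I : Set Atom} (D : Deriv Rset I)

lemma inst_subset_of_closed {S : Set Atom} (hI : I ⊆ S)
    (hS : ∀ t : Trigger, t.rule ∈ Rset → t.isOn S → (t.out : Set Atom) ⊆ S) (n : ℕ) :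
    D.inst n ⊆ S := by
  induction n with
  | zero => exact hI
  | succ n ih =>
    change D.inst n ∪ _ ⊆ S
    split
    · simpa using ih
    · obtain ⟨hR, hon, -⟩ := D.valid n _ ‹_›
      exact Set.union_subset ih (hS _ hR fun a ha => ih (hon a ha))

lemma inst_strictMono (hD : ¬ D.Finite) : StrictMono D.inst := by
  refine strictMono_nat_of_lt_succ fun n => ?_
  change instSeq I D.steps n ⊂ instSeq I D.steps n ∪ _
  split
  · exact absurd ⟨n, ‹_›⟩ hD
  · exact Set.ssubset_iff_subset_ne.2 ⟨Set.subset_union_left,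
      fun h => (D.valid n _ ‹_›).2.2 (h ▸ Set.subset_union_right)⟩

/-- Every step adds a new atom. -/
lemma finite_of_closed {S : Set Atom} (hfin : S.Finite) (hI : I ⊆ S)
    (hS : ∀ t : Trigger, t.rule ∈ Rset → t.isOn S → (t.out : Set Atom) ⊆ S) : D.Finite := by
  by_contra hD
  exact Set.infinite_range_of_injective (D.inst_strictMono hD).injective
    (hfin.finite_subsets.subset (Set.range_subset_iff.2 (D.inst_subset_of_closed hI hS)))

end Deriv

lemma mem_varsF {A : Finset Atom} {a : Atom} (ha : a ∈ A) {v : Var} (hv : Sum.inr v ∈ a.2) :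
    v ∈ varsF A :=
  Finset.mem_biUnion.2 ⟨a, ha, List.mem_toFinset.2 (List.mem_filterMap.2 ⟨_, hv, rfl⟩)⟩

lemma varsF_subset_iff {A : Finset Atom} {V : Finset Var} :
    varsF A ⊆ V ↔ ∀ a ∈ A, ∀ v, Sum.inr v ∈ a.2 → v ∈ V := by
  rw [varsF, Finset.biUnion_subset]
  simp only [atomVarsF, Finset.subset_iff, List.mem_toFinset, List.mem_filterMap,
    Sum.getRight?_eq_some_iff]
  exact ⟨fun h a ha v hv => h a ha ⟨_, hv, rfl⟩, fun h a ha v ⟨_, hx, hv⟩ => h a ha v (hv ▸ hx)⟩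

lemma varsF_mono {A B : Finset Atom} (h : A ⊆ B) : varsF A ⊆ varsF B :=
  Finset.biUnion_subset_biUnion_of_subset_left _ h

@[simp] lemma applyA_mk (σ : Subst) (P : ℕ) (l : List FTerm) :
    applyA σ (P, l) = (P, l.map (applyT σ)) := rfl

@[simp] lemma applyT_vt (σ : Subst) (n : ℕ) : applyT σ (vt n) = σ (Sum.inl n) := rfl

namespace Trigger

lemma extSub_of_mem {t : Trigger} {v : Var} (hv : v ∈ varsF t.rule.1) : t.extSub v = t.sub v :=
  if_pos hv

lemma out_mk_of_datalog {R : Rule} {σ : Subst} (h : varsF R.2 ⊆ varsF R.1) :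
    (Trigger.mk R σ).out = R.2.image (applyA σ) := by
  refine Finset.image_congr fun b hb => Prod.ext rfl (List.map_congr_left fun x hx => ?_)
  rcases x with c | v
  · rfl
  · exact extSub_of_mem (h (mem_varsF hb hx))

end Trigger

lemma mem_adom {J : Set Atom} {a : Atom} (ha : a ∈ J) {u : FTerm} (hu : u ∈ a.2) : u ∈ adom J :=
  ⟨a, ha, hu⟩

lemma adom_finite {J : Set Atom} (hJ : J.Finite) : (adom J).Finite :=
  (hJ.biUnion fun a _ => a.2.finite_toSet).subset fun _ ⟨_, ha, hu⟩ => Set.mem_biUnion ha hu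

lemma finite_setOf_length_le_forall_mem {α : Type*} {S : Set α} (hS : S.Finite) (n : ℕ) :
    {l : List α | l.length ≤ n ∧ ∀ x ∈ l, x ∈ S}.Finite := by
  have := hS.to_subtype
  refine ((List.finite_length_le S n).image (List.map Subtype.val)).subset ?_
  rintro l ⟨hl, hlS⟩
  exact ⟨l.attachWith _ hlS, by simpa using hl, List.attachWith_map_subtype_val hlS⟩

lemma SPath.mono {J K : Set Atom} (h : J ⊆ K) {k : ℕ} {s t : FTerm} (hp : SPath J k s t) :
    SPath K k s t := by
  induction k generalizing s with
  | zero => exact hp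
  | succ k ih => obtain ⟨u, hu, hp⟩ := hp; exact ⟨u, h hu, ih hp⟩

lemma SPath.append {J : Set Atom} {k l : ℕ} {s t r : FTerm} (h₁ : SPath J k s t)
    (h₂ : SPath J l t r) : SPath J (k + l) s r := by
  induction k generalizing s with
  | zero => rwa [zero_add, show s = t from h₁]
  | succ k ih =>
    obtain ⟨u, hu, h₁⟩ := h₁
    rw [Nat.add_right_comm]
    exact ⟨u, hu, ih h₁⟩

lemma SPath.mem_adom_left {J : Set Atom} {k : ℕ} {s t : FTerm} (hk : 0 < k)
    (hp : SPath J k s t) : s ∈ adom J := by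
  obtain ⟨k, rfl⟩ := Nat.exists_eq_add_of_lt hk
  obtain ⟨u, hu, -⟩ := hp
  exact ⟨_, hu, by simp⟩

lemma SPath.mem_adom_right {J : Set Atom} {k : ℕ} {s t : FTerm} (hk : 0 < k)
    (hp : SPath J k s t) : t ∈ adom J := by
  induction k generalizing s with
  | zero => omega
  | succ k ih =>
    obtain ⟨u, hu, hp⟩ := hp
    rcases Nat.eq_zero_or_pos k with rfl | hk
    · exact ⟨_, (show u = t from hp) ▸ hu, by simp⟩
    · exact ih hk hp

lemma SPath.of_spath {σ : Subst} {J : Set Atom} {a b base n : ℕ} (hn : 0 < n)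
    (h : ∀ x ∈ spath a b base n, applyA σ x ∈ J) :
    SPath J n (σ (Sum.inl a)) (σ (Sum.inl b)) := by
  have key : ∀ k j, j + k = n →
      SPath J k (applyT σ (pathVar a b base n j)) (applyT σ (pathVar a b base n n)) := by
    intro k
    induction k with
    | zero => intro j hj; obtain rfl : j = n := hj; rfl
    | succ k ih =>
      exact fun j hj => ⟨_, h _ (Finset.mem_image.2 ⟨j, Finset.mem_range.2 (by omega), rfl⟩),
        ih (j + 1) (by omega)⟩
  simpa [pathVar, hn.ne'] using key n 0 (by omega)

lemma mem_varsF_spath {a b base n : ℕ} (hn : 0 < n) :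
    Sum.inl a ∈ varsF (spath a b base n) ∧ Sum.inl b ∈ varsF (spath a b base n) := by
  refine ⟨mem_varsF (Finset.mem_image.2 ⟨0, Finset.mem_range.2 hn, rfl⟩) ?_,
    mem_varsF (Finset.mem_image.2 ⟨n - 1, Finset.mem_range.2 (by omega), rfl⟩) ?_⟩
  · simp [pathVar, vt]
  · simp [pathVar, vt, Nat.sub_add_cancel hn, hn.ne']

namespace RM

/-- The null that rule (9) creates for the frontier `y, z`, i.e. the value of `Trigger.extSub`
at the existential variable `x₀` (the trigger code only sees the body variables `x₁, x₂`). -/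
def freshNull (M : TCM) (y z : FTerm) : FTerm :=
  Sum.inr (Sum.inr (Encodable.encode (ruleEx M,
    ({(Sum.inl 1, y), (Sum.inl 2, z)} : Finset (Var × FTerm))), Encodable.encode (Sum.inl 0 : Var)))

lemma freshNull_inj {M : TCM} {y z y' z' : FTerm} (h : freshNull M y z = freshNull M y' z') :
    y = y' ∧ z = z' := by
  simp only [freshNull, Sum.inr.injEq, Prod.mk.injEq, and_true] at h
  have h' : ({(Sum.inl 1, y), (Sum.inl 2, z)} : Finset (Var × FTerm)) =
      {(Sum.inl 1, y'), (Sum.inl 2, z')} := congrArg Prod.snd (Encodable.encode_injective h)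
  have hy : ((Sum.inl 1 : Var), y) ∈ ({(Sum.inl 1, y'), (Sum.inl 2, z')} :
      Finset (Var × FTerm)) := h' ▸ by simp
  have hz : ((Sum.inl 2 : Var), z) ∈ ({(Sum.inl 1, y'), (Sum.inl 2, z')} :
      Finset (Var × FTerm)) := h' ▸ by simp
  simp_all

/-- One application of a rule of `R_M` to `J`: one constructor per rule (1)–(9) and head atom. -/
inductive Step (M : TCM) (J : Set Atom) : Atom → Prop
  | s_of_s0 {x y : FTerm} : (pS0, [x, y]) ∈ J → Step M J (pS, [x, y])
  | r_succ {i : ℕ} {x y z : FTerm} : i < M.p → (pR i, [x, y]) ∈ J → (pS, [y, z]) ∈ J →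
      Step M J (pR ((i + 1) % M.p), [x, z])
  | t_succ {i : ℕ} {x y z y' z' : FTerm} : i < M.p → (pT i, [x, y, z]) ∈ J →
      SPath J (M.ri i) y y' → SPath J (M.qi i) z z' → Step M J (pT i, [x, y', z'])
  | flood {x y : FTerm} : (pS, [x, y]) ∈ J → Step M J (pFlood, [y])
  | s_loop {x : FTerm} : (pEnd, [x]) ∈ J → Step M J (pS, [x, x])
  | g_init {x y : FTerm} : SPath J 2 x y → Step M J (pG, [x, y])
  | g_succ {i : ℕ} {x y z : FTerm} : i < M.p → (pG, [x, y]) ∈ J → (pR i, [x, y]) ∈ J →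
      (pT i, [x, y, z]) ∈ J → Step M J (pG, [x, z])
  | g_flood {x y z : FTerm} : (pFlood, [x]) ∈ J → (pFlood, [y]) ∈ J → (pFlood, [z]) ∈ J →
      Step M J (pG, [x, y])
  | r_flood {j : ℕ} {x y z : FTerm} : j < M.p → (pFlood, [x]) ∈ J → (pFlood, [y]) ∈ J →
      (pFlood, [z]) ∈ J → Step M J (pR j, [x, y])
  | t_flood {j : ℕ} {x y z : FTerm} : j < M.p → (pFlood, [x]) ∈ J → (pFlood, [y]) ∈ J →
      (pFlood, [z]) ∈ J → Step M J (pT j, [x, y, z])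
  | s0_fresh {y z : FTerm} : (pG, [y, z]) ∈ J → (pEnd, [z]) ∈ J →
      Step M J (pS0, [freshNull M y z, y])
  | r_fresh {y z : FTerm} : (pG, [y, z]) ∈ J → (pEnd, [z]) ∈ J →
      Step M J (pR 0, [freshNull M y z, freshNull M y z])
  | t_fresh {j : ℕ} {y z : FTerm} : j < M.p → (pG, [y, z]) ∈ J → (pEnd, [z]) ∈ J →
      Step M J (pT j, [freshNull M y z, freshNull M y z, freshNull M y z])

variable {M : TCM}

lemma Step.mono {J K : Set Atom} (hJK : J ⊆ K) {a : Atom} (h : Step M J a) : Step M K a := by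
  cases h with
  | s_of_s0 h => exact .s_of_s0 (hJK h)
  | r_succ hi h₁ h₂ => exact .r_succ hi (hJK h₁) (hJK h₂)
  | t_succ hi h₁ h₂ h₃ => exact .t_succ hi (hJK h₁) (h₂.mono hJK) (h₃.mono hJK)
  | flood h => exact .flood (hJK h)
  | s_loop h => exact .s_loop (hJK h)
  | g_init h => exact .g_init (h.mono hJK)
  | g_succ hi h₁ h₂ h₃ => exact .g_succ hi (hJK h₁) (hJK h₂) (hJK h₃)
  | g_flood h₁ h₂ h₃ => exact .g_flood (hJK h₁) (hJK h₂) (hJK h₃)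
  | r_flood hj h₁ h₂ h₃ => exact .r_flood hj (hJK h₁) (hJK h₂) (hJK h₃)
  | t_flood hj h₁ h₂ h₃ => exact .t_flood hj (hJK h₁) (hJK h₂) (hJK h₃)
  | s0_fresh h₁ h₂ => exact .s0_fresh (hJK h₁) (hJK h₂)
  | r_fresh h₁ h₂ => exact .r_fresh (hJK h₁) (hJK h₂)
  | t_fresh hj h₁ h₂ => exact .t_fresh hj (hJK h₁) (hJK h₂)

variable (M) in
def chaseOp (I : Set Atom) : Set Atom →o Set Atom where
  toFun J := I ∪ {a | Step M J a}
  monotone' _ _ hJK := Set.union_subset_union_right _ fun _ => Step.mono hJK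

variable (M) in
def chase (I : Set Atom) : Set Atom := (chaseOp M I).lfp

section Chase

variable {I : Set Atom}

lemma mem_chase_iff {a : Atom} : a ∈ chase M I ↔ a ∈ I ∨ Step M (chase M I) a :=
  (Set.ext_iff.1 (chaseOp M I).map_lfp a).symm

lemma subset_chase : I ⊆ chase M I := fun _ ha => mem_chase_iff.2 (Or.inl ha)

lemma Step.mem_chase {a : Atom} (h : Step M (chase M I) a) : a ∈ chase M I :=
  mem_chase_iff.2 (Or.inr h)

lemma chase_induction {P : Atom → Prop} (base : ∀ a ∈ I, P a)
    (step : ∀ a, Step M {b | b ∈ chase M I ∧ P b} a → P a) : ∀ a ∈ chase M I, P a :=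
  fun _ ha => ((chaseOp M I).lfp_le (a := {b | b ∈ chase M I ∧ P b}) (by
    rintro b (hb | hb)
    · exact ⟨subset_chase hb, base b hb⟩
    · exact ⟨(hb.mono fun _ h => h.1).mem_chase, step b hb⟩) ha).2

end Chase

section Rules

variable {J : Set Atom} {σ : Subst} {a : Atom}

lemma Step.of_ruleS (hon : Trigger.isOn ⟨ruleS, σ⟩ J) (ha : a ∈ Trigger.out ⟨ruleS, σ⟩) :
    Step M J a := by
  rw [Trigger.out_mk_of_datalog (by rw [varsF_subset_iff]; simp [varsF, atomVarsF, ruleS, vt])]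
    at ha
  simp only [ruleS, Finset.image_singleton, Finset.mem_singleton] at ha
  subst ha
  simpa using Step.s_of_s0 (M := M) (hon (pS0, [vt 0, vt 1]) (by simp [ruleS]))

lemma Step.of_ruleR {i : ℕ} (hi : i < M.p) (hon : Trigger.isOn ⟨ruleR M i, σ⟩ J)
    (ha : a ∈ Trigger.out ⟨ruleR M i, σ⟩) : Step M J a := by
  rw [Trigger.out_mk_of_datalog (by rw [varsF_subset_iff]; simp [varsF, atomVarsF, ruleR, vt])]
    at ha
  simp only [ruleR, Finset.image_singleton, Finset.mem_singleton] at ha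
  subst ha
  simpa using Step.r_succ hi (hon (pR i, [vt 0, vt 1]) (by simp [ruleR]))
    (hon (pS, [vt 1, vt 2]) (by simp [ruleR]))

lemma Step.of_ruleT {i : ℕ} (hi : i < M.p) (hon : Trigger.isOn ⟨ruleT M i, σ⟩ J)
    (ha : a ∈ Trigger.out ⟨ruleT M i, σ⟩) : Step M J a := by
  obtain ⟨hq, hr⟩ := M.qi_ri_pos i
  have h₁ : spath 1 3 10 (M.ri i) ⊆ (ruleT M i).1 := fun x hx => by simp [ruleT, hx]
  have h₂ : spath 2 4 (11 + M.ri i) (M.qi i) ⊆ (ruleT M i).1 := fun x hx => by simp [ruleT, hx]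
  have hvars : varsF (ruleT M i).2 ⊆ varsF (ruleT M i).1 := by
    rw [varsF_subset_iff]
    simp only [ruleT, Finset.mem_singleton, forall_eq, vt, List.mem_cons, Sum.inr.injEq,
      List.not_mem_nil, or_false]
    rintro v (rfl | rfl | rfl)
    · exact mem_varsF (by simp [ruleT] : (pT i, [vt 0, vt 1, vt 2]) ∈ (ruleT M i).1)
        (by simp [vt])
    · exact varsF_mono h₁ (mem_varsF_spath hr).2
    · exact varsF_mono h₂ (mem_varsF_spath hq).2
  rw [Trigger.out_mk_of_datalog hvars] at ha
  simp only [ruleT, Finset.image_singleton, Finset.mem_singleton] at ha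
  subst ha
  simpa using Step.t_succ hi (hon (pT i, [vt 0, vt 1, vt 2]) (by simp [ruleT]))
    (SPath.of_spath hr fun x hx => hon x (h₁ hx))
    (SPath.of_spath hq fun x hx => hon x (h₂ hx))

lemma Step.of_ruleFloodProp (hon : Trigger.isOn ⟨ruleFloodProp, σ⟩ J)
    (ha : a ∈ Trigger.out ⟨ruleFloodProp, σ⟩) : Step M J a := by
  rw [Trigger.out_mk_of_datalog
    (by rw [varsF_subset_iff]; simp [varsF, atomVarsF, ruleFloodProp, vt])] at ha
  simp only [ruleFloodProp, Finset.image_singleton, Finset.mem_singleton] at ha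
  subst ha
  simpa using Step.flood (M := M) (hon (pS, [vt 0, vt 1]) (by simp [ruleFloodProp]))

lemma Step.of_ruleSEnd (hon : Trigger.isOn ⟨ruleSEnd, σ⟩ J)
    (ha : a ∈ Trigger.out ⟨ruleSEnd, σ⟩) : Step M J a := by
  rw [Trigger.out_mk_of_datalog
    (by rw [varsF_subset_iff]; simp [varsF, atomVarsF, ruleSEnd, vt])] at ha
  simp only [ruleSEnd, Finset.image_singleton, Finset.mem_singleton] at ha
  subst ha
  simpa using Step.s_loop (M := M) (hon (pEnd, [vt 0]) (by simp [ruleSEnd]))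

lemma Step.of_ruleGInit (hon : Trigger.isOn ⟨ruleGInit, σ⟩ J)
    (ha : a ∈ Trigger.out ⟨ruleGInit, σ⟩) : Step M J a := by
  have hvars : varsF ruleGInit.2 ⊆ varsF ruleGInit.1 := by
    rw [varsF_subset_iff]
    simp only [ruleGInit, Finset.mem_singleton, forall_eq, vt, List.mem_cons, Sum.inr.injEq,
      List.not_mem_nil, or_false]
    rintro v (rfl | rfl)
    exacts [(mem_varsF_spath two_pos).1, (mem_varsF_spath two_pos).2]
  rw [Trigger.out_mk_of_datalog hvars] at ha
  simp only [ruleGInit, Finset.image_singleton, Finset.mem_singleton] at ha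
  subst ha
  simpa using Step.g_init (M := M) (SPath.of_spath two_pos hon)

lemma Step.of_ruleGStep {i : ℕ} (hi : i < M.p) (hon : Trigger.isOn ⟨ruleGStep i, σ⟩ J)
    (ha : a ∈ Trigger.out ⟨ruleGStep i, σ⟩) : Step M J a := by
  rw [Trigger.out_mk_of_datalog
    (by rw [varsF_subset_iff]; simp [varsF, atomVarsF, ruleGStep, vt])] at ha
  simp only [ruleGStep, Finset.image_singleton, Finset.mem_singleton] at ha
  subst ha
  simpa using Step.g_succ hi (hon (pG, [vt 0, vt 1]) (by simp [ruleGStep]))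
    (hon (pR i, [vt 0, vt 1]) (by simp [ruleGStep]))
    (hon (pT i, [vt 0, vt 1, vt 2]) (by simp [ruleGStep]))

lemma Step.of_ruleFloodGen (hon : Trigger.isOn ⟨ruleFloodGen M, σ⟩ J)
    (ha : a ∈ Trigger.out ⟨ruleFloodGen M, σ⟩) : Step M J a := by
  have hF : ∀ n, n < 3 → (pFlood, [σ (Sum.inl n)]) ∈ J := fun n hn => by
    simpa using hon (pFlood, [vt n]) (by interval_cases n <;> simp [ruleFloodGen])
  have hbody : ∀ n, n < 3 → Sum.inl n ∈ varsF (ruleFloodGen M).1 := fun n hn =>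
    mem_varsF (a := (pFlood, [vt n])) (by interval_cases n <;> simp [ruleFloodGen])
      (by simp [vt])
  have hvars : varsF (ruleFloodGen M).2 ⊆ varsF (ruleFloodGen M).1 := by
    rw [varsF_subset_iff]
    simp only [ruleFloodGen, Finset.mem_union, Finset.mem_singleton, Finset.mem_biUnion,
      Finset.mem_range, Finset.mem_insert]
    rintro _ (rfl | ⟨j, -, rfl | rfl⟩) v hv <;> simp [vt] at hv <;>
      rcases hv with rfl | rfl | rfl <;> exact hbody _ (by omega)
  rw [Trigger.out_mk_of_datalog hvars] at ha
  obtain ⟨b, hb, rfl⟩ := Finset.mem_image.1 ha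
  simp only [ruleFloodGen, Finset.mem_union, Finset.mem_singleton, Finset.mem_biUnion,
    Finset.mem_range, Finset.mem_insert] at hb
  rcases hb with rfl | ⟨j, hj, rfl | rfl⟩
  · simpa using Step.g_flood (M := M) (hF 0 (by omega)) (hF 1 (by omega)) (hF 2 (by omega))
  · simpa using Step.r_flood hj (hF 0 (by omega)) (hF 1 (by omega)) (hF 2 (by omega))
  · simpa using Step.t_flood hj (hF 0 (by omega)) (hF 1 (by omega)) (hF 2 (by omega))

lemma extSub_ruleEx : Trigger.extSub ⟨ruleEx M, σ⟩ (Sum.inl 0) =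
    freshNull M (σ (Sum.inl 1)) (σ (Sum.inl 2)) := by
  have hbody : varsF (ruleEx M).1 = {Sum.inl 1, Sum.inl 2} := by
    ext v; simp [varsF, atomVarsF, ruleEx, vt]
  simp [Trigger.extSub, Trigger.code, hbody, freshNull]

lemma Step.of_ruleEx (hon : Trigger.isOn ⟨ruleEx M, σ⟩ J)
    (ha : a ∈ Trigger.out ⟨ruleEx M, σ⟩) : Step M J a := by
  have hG := hon (pG, [vt 1, vt 2]) (by simp [ruleEx])
  have hE := hon (pEnd, [vt 2]) (by simp [ruleEx])
  have h₁ : Trigger.extSub ⟨ruleEx M, σ⟩ (Sum.inl 1) = σ (Sum.inl 1) :=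
    Trigger.extSub_of_mem (mem_varsF (by simp [ruleEx] : (pG, [vt 1, vt 2]) ∈ (ruleEx M).1)
      (by simp [vt]))
  simp only [applyA_mk, List.map_cons, List.map_nil, applyT_vt] at hG hE
  obtain ⟨b, hb, rfl⟩ := Finset.mem_image.1 ha
  simp only [ruleEx, Finset.mem_union, Finset.mem_insert, Finset.mem_singleton,
    Finset.mem_biUnion, Finset.mem_range] at hb
  rcases hb with (rfl | rfl) | ⟨j, hj, rfl⟩
  · simpa [extSub_ruleEx, h₁] using Step.s0_fresh hG hE
  · simpa [extSub_ruleEx] using Step.r_fresh hG hE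
  · simpa [extSub_ruleEx] using Step.t_fresh hj hG hE

lemma Step.of_trigger {t : Trigger} (hR : t.rule ∈ RM M) (hon : t.isOn J) (ha : a ∈ t.out) :
    Step M J a := by
  obtain ⟨R, σ⟩ := t
  simp only [RM, Finset.mem_union, Finset.mem_insert, Finset.mem_singleton, Finset.mem_biUnion,
    Finset.mem_range] at hR
  rcases hR with (rfl | rfl | rfl | rfl | rfl | rfl) | ⟨i, hi, rfl | rfl | rfl⟩
  exacts [of_ruleS hon ha, of_ruleFloodProp hon ha, of_ruleSEnd hon ha, of_ruleGInit hon ha,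
    of_ruleFloodGen hon ha, of_ruleEx hon ha, of_ruleR hi hon ha, of_ruleT hi hon ha,
    of_ruleGStep hi hon ha]

lemma Step.not_pEnd {l : List FTerm} : ¬ Step M J (pEnd, l) := by
  generalize ha : (pEnd, l) = a
  intro h
  cases h <;> simp +arith [pEnd, pR, pT, pS, pS0, pG, pFlood] at ha

lemma Step.pS0_inv {w u : FTerm} (h : Step M J (pS0, [w, u])) :
    ∃ z, w = freshNull M u z ∧ (pG, [u, z]) ∈ J ∧ (pEnd, [z]) ∈ J := by
  generalize ha : (pS0, [w, u]) = a at h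
  cases h <;> simp +arith [pR, pT, pS, pS0, pG] at ha
  obtain ⟨rfl, rfl⟩ := ha
  exact ⟨_, rfl, ‹_›, ‹_›⟩

lemma Step.pS_inv {w u : FTerm} (h : Step M J (pS, [w, u])) :
    (pS0, [w, u]) ∈ J ∨ (w = u ∧ (pEnd, [w]) ∈ J) := by
  generalize ha : (pS, [w, u]) = a at h
  cases h <;> simp +arith [pR, pT, pS, pS0, pG] at ha
  · obtain ⟨rfl, rfl⟩ := ha; exact Or.inl ‹_›
  · obtain ⟨rfl, rfl⟩ := ha; exact Or.inr ⟨rfl, ‹_›⟩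

lemma Step.pFlood_inv {y : FTerm} (h : Step M J (pFlood, [y])) : ∃ x, (pS, [x, y]) ∈ J := by
  generalize ha : (pFlood, [y]) = a at h
  cases h <;> simp +arith [pFlood] at ha
  obtain rfl := ha
  exact ⟨_, ‹_›⟩

lemma Step.pG_inv {x z : FTerm} (h : Step M J (pG, [x, z])) :
    SPath J 2 x z ∨
      (∃ i y, (pG, [x, y]) ∈ J ∧ (pR i, [x, y]) ∈ J ∧ (pT i, [x, y, z]) ∈ J) ∨
      (pFlood, [x]) ∈ J := by
  generalize ha : (pG, [x, z]) = a at h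
  cases h <;> simp +arith [pR, pT, pS, pS0, pG] at ha <;> obtain ⟨rfl, rfl⟩ := ha
  · exact Or.inl ‹_›
  · exact Or.inr (Or.inl ⟨_, _, ‹_›, ‹_›, ‹_›⟩)
  · exact Or.inr (Or.inr ‹_›)

lemma Step.pR_inv {i : ℕ} {x z : FTerm} (h : Step M J (pR i, [x, z])) :
    (∃ i' y, i = (i' + 1) % M.p ∧ (pR i', [x, y]) ∈ J ∧ (pS, [y, z]) ∈ J) ∨
      (pFlood, [x]) ∈ J ∨ (i = 0 ∧ x = z) := by
  generalize ha : (pR i, [x, z]) = a at h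
  cases h <;> simp +arith [pR, pT, pS, pS0, pG] at ha <;> obtain ⟨rfl, rfl, rfl⟩ := ha
  · exact Or.inl ⟨_, _, rfl, ‹_›, ‹_›⟩
  · exact Or.inr (Or.inl ‹_›)
  · exact Or.inr (Or.inr ⟨rfl, rfl⟩)

lemma Step.pT_inv {i : ℕ} {x u v : FTerm} (h : Step M J (pT i, [x, u, v])) :
    (∃ y z, (pT i, [x, y, z]) ∈ J ∧ SPath J (M.ri i) y u ∧ SPath J (M.qi i) z v) ∨
      (pFlood, [x]) ∈ J ∨ (u = x ∧ v = x) := by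
  generalize ha : (pT i, [x, u, v]) = a at h
  cases h <;> simp +arith [pT] at ha <;> obtain ⟨rfl, rfl, rfl, rfl⟩ := ha
  · exact Or.inl ⟨_, _, ‹_›, ‹_›, ‹_›⟩
  · exact Or.inr (Or.inl ‹_›)
  · exact Or.inr (Or.inr ⟨rfl, rfl⟩)

lemma Step.mem_args (h : Step M J a) {u : FTerm} (hu : u ∈ a.2) :
    u ∈ adom J ∨ ∃ y z, u = freshNull M y z ∧ (pG, [y, z]) ∈ J ∧ (pEnd, [z]) ∈ J := by
  have hr := M.qi_ri_pos
  cases h with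
  | s_of_s0 h | s_loop h | flood h => exact Or.inl (mem_adom h (by simp_all))
  | r_succ _ h₁ h₂ | g_succ _ _ h₁ h₂ =>
    simp only [List.mem_cons, List.not_mem_nil, or_false] at hu
    rcases hu with rfl | rfl
    exacts [Or.inl (mem_adom h₁ (by simp)), Or.inl (mem_adom h₂ (by simp))]
  | t_succ _ h₁ h₂ h₃ =>
    simp only [List.mem_cons, List.not_mem_nil, or_false] at hu
    rcases hu with rfl | rfl | rfl
    exacts [Or.inl (mem_adom h₁ (by simp)), Or.inl (h₂.mem_adom_right (hr _).2),
      Or.inl (h₃.mem_adom_right (hr _).1)]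
  | g_init h =>
    simp only [List.mem_cons, List.not_mem_nil, or_false] at hu
    rcases hu with rfl | rfl
    exacts [Or.inl (h.mem_adom_left two_pos), Or.inl (h.mem_adom_right two_pos)]
  | g_flood h₁ h₂ _ | r_flood _ h₁ h₂ _ =>
    simp only [List.mem_cons, List.not_mem_nil, or_false] at hu
    rcases hu with rfl | rfl
    exacts [Or.inl (mem_adom h₁ (by simp)), Or.inl (mem_adom h₂ (by simp))]
  | t_flood _ h₁ h₂ h₃ =>
    simp only [List.mem_cons, List.not_mem_nil, or_false] at hu
    rcases hu with rfl | rfl | rfl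
    exacts [Or.inl (mem_adom h₁ (by simp)), Or.inl (mem_adom h₂ (by simp)),
      Or.inl (mem_adom h₃ (by simp))]
  | s0_fresh hG hE =>
    simp only [List.mem_cons, List.not_mem_nil, or_false] at hu
    rcases hu with rfl | rfl
    exacts [Or.inr ⟨_, _, rfl, hG, hE⟩, Or.inl (mem_adom hG (by simp))]
  | r_fresh hG hE | t_fresh _ hG hE =>
    simp only [List.mem_cons, List.not_mem_nil, or_false, or_self] at hu
    exact Or.inr ⟨_, _, hu, hG, hE⟩

lemma Step.shape (h : Step M J a) :
    a.1 < 7 + 2 * M.p ∧ a.2.length ≤ 3 := by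
  have hp := M.p_pos
  cases h <;> simp only [pS, pR, pT, pG, pFlood, pS0, List.length_cons, List.length_nil] <;>
    first | omega | (have := Nat.mod_lt (‹ℕ› + 1) hp; omega)

end Rules

variable {I : Set Atom}

lemma chase_closed {t : Trigger} (hR : t.rule ∈ RM M) (hon : t.isOn (chase M I)) :
    (t.out : Set Atom) ⊆ chase M I :=
  fun _ ha => (Step.of_trigger hR hon ha).mem_chase

lemma mem_chase_pEnd {l : List FTerm} (h : (pEnd, l) ∈ chase M I) : (pEnd, l) ∈ I :=
  (mem_chase_iff.1 h).resolve_right Step.not_pEnd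

lemma eq_freshNull_of_pS_mem_chase {w u : FTerm} (h : (pS, [w, u]) ∈ chase M I)
    (hwu : w ∉ adom I ∨ u ∉ adom I) :
    ∃ z, w = freshNull M u z ∧ (pG, [u, z]) ∈ chase M I ∧ (pEnd, [z]) ∈ I := by
  have hI : ∀ P, (P, [w, u]) ∈ I → False := fun P hP =>
    hwu.elim (· (mem_adom hP (by simp))) (· (mem_adom hP (by simp)))
  rcases mem_chase_iff.1 h with h | h
  · exact (hI _ h).elim
  rcases h.pS_inv with hS0 | ⟨rfl, hE⟩
  · rcases mem_chase_iff.1 hS0 with hS0 | hS0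
    · exact (hI _ hS0).elim
    obtain ⟨z, rfl, hG, hE⟩ := hS0.pS0_inv
    exact ⟨z, rfl, hG, mem_chase_pEnd hE⟩
  · have : w ∈ adom I := mem_adom (mem_chase_pEnd hE) (by simp)
    exact (hwu.elim (· this) (· this)).elim

variable (M I) in
/-- A fresh null that happens to occur in `I` counts as a term of `I`, of height `0`. -/
def HasHeight : ℕ → FTerm → Prop
  | 0, u => u ∈ adom I
  | h + 1, u => u ∉ adom I ∧ ∃ y z, u = freshNull M y z ∧ (pG, [y, z]) ∈ chase M I ∧
      (pEnd, [z]) ∈ I ∧ HasHeight h y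

lemma HasHeight.not_mem_adom {h : ℕ} {u : FTerm} (hh : 0 < h) (hu : HasHeight M I h u) :
    u ∉ adom I := by
  obtain ⟨h, rfl⟩ := Nat.exists_eq_add_of_lt hh
  exact hu.1

lemma HasHeight.unique {h h' : ℕ} {u : FTerm} (hu : HasHeight M I h u)
    (hu' : HasHeight M I h' u) : h = h' := by
  induction h generalizing h' u with
  | zero => cases h' with
    | zero => rfl
    | succ h' => exact absurd hu hu'.1
  | succ h ih => cases h' with
    | zero => exact absurd hu' hu.1
    | succ h' =>
      obtain ⟨-, y, z, rfl, -, -, hy⟩ := hu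
      obtain ⟨-, y', z', he, -, -, hy'⟩ := hu'
      obtain ⟨rfl, -⟩ := freshNull_inj he
      rw [ih hy hy']

variable (M) in
def parent (u : FTerm) : FTerm :=
  if h : ∃ y z, u = freshNull M y z then h.choose else u

lemma parent_freshNull (y z : FTerm) : parent M (freshNull M y z) = y := by
  have h : ∃ y' z', freshNull M y z = freshNull M y' z' := ⟨y, z, rfl⟩
  rw [parent, dif_pos h]
  obtain ⟨z', hz⟩ := h.choose_spec
  exact (freshNull_inj hz).1.symm

lemma HasHeight.iterate_parent {h j : ℕ} {u : FTerm} (hu : HasHeight M I h u) (hj : j ≤ h) :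
    HasHeight M I (h - j) ((parent M)^[j] u) := by
  induction j generalizing h u with
  | zero => exact hu
  | succ j ih =>
    obtain ⟨h, rfl⟩ := Nat.exists_eq_add_of_lt hj
    obtain ⟨-, y, z, rfl, -, -, hy⟩ := hu
    rw [Function.iterate_succ_apply, parent_freshNull]
    simpa using ih hy (by omega)

lemma HasHeight.iterate_parent_inj {h j j' : ℕ} {u : FTerm} (hu : HasHeight M I h u)
    (hj : j ≤ h) (hj' : j' ≤ h) (he : (parent M)^[j] u = (parent M)^[j'] u) : j = j' := by
  have := (hu.iterate_parent hj).unique (he ▸ hu.iterate_parent hj')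
  omega

lemma _root_.SPath.eq_iterate_parent {s h : ℕ} {x w : FTerm} (hx : HasHeight M I h x)
    (hs : s ≤ h) (hp : SPath (chase M I) s x w) : w = (parent M)^[s] x := by
  induction s generalizing h x with
  | zero => exact hp.symm
  | succ s ih =>
    obtain ⟨v, hxv, hp⟩ := hp
    obtain ⟨h, rfl⟩ := Nat.exists_eq_add_of_lt hs
    obtain ⟨hxI, y, z, rfl, -, -, hy⟩ := hx
    obtain ⟨z', he, -⟩ := eq_freshNull_of_pS_mem_chase hxv (Or.inl hxI)
    obtain ⟨rfl, -⟩ := freshNull_inj he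
    rw [Function.iterate_succ_apply, parent_freshNull]
    exact ih hy (by omega) hp

variable (M I) in
/-- `I` may contain fresh nulls; `Hst` bounds the heights of their parents. -/
def CollidingHeightsLE (Hst : ℕ) : Prop :=
  ∀ v z k, freshNull M v z ∈ adom I → HasHeight M I k v → k ≤ Hst

/-- Above `Hst`, an `S`-edge into a null always comes from a child of that null. -/
lemma _root_.SPath.exists_height_of_deep {Hst s k : ℕ} {u w : FTerm}
    (hH : CollidingHeightsLE M I Hst)
    (hp : SPath (chase M I) s u w) (hw : HasHeight M I k w) (hdeep : Hst < k) :
    ∃ h, HasHeight M I h u ∧ w = (parent M)^[s] u ∧ s + k ≤ h := by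
  induction s generalizing u with
  | zero => exact ⟨k, (show u = w from hp) ▸ hw, hp.symm, by omega⟩
  | succ s ih =>
    obtain ⟨v, huv, hp⟩ := hp
    obtain ⟨hv, hvh, rfl, hle⟩ := ih hp
    obtain ⟨z, rfl, hG, hE⟩ :=
      eq_freshNull_of_pS_mem_chase huv (Or.inr (hvh.not_mem_adom (by omega)))
    by_cases hu : freshNull M v z ∈ adom I
    · exact absurd (hH v z hv hu hvh) (by omega)
    · refine ⟨hv + 1, ⟨hu, v, z, rfl, hG, hE, hvh⟩, ?_, by omega⟩
      rw [Function.iterate_succ_apply, parent_freshNull]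

variable (M I) in
/-- The invariant through which the chase simulates `g` at a null `x` lying high above `I`. -/
structure DeepInv (x : FTerm) (a : Atom) : Prop where
  g : ∀ u, a = (pG, [x, u]) → ∃ k, u = (parent M)^[M.gIter k] x
  r : ∀ i u, a = (pR i, [x, u]) → ∃ d, d % M.p = i ∧ SPath (chase M I) d x u
  t : ∀ i u v, a = (pT i, [x, u, v]) →
    ∃ c, SPath (chase M I) (c * M.ri i) x u ∧ SPath (chase M I) (c * M.qi i) x v
  not_flood : a ≠ (pFlood, [x])
  not_s : ∀ w, a ≠ (pS, [w, x])
  not_s0 : ∀ w, a ≠ (pS0, [w, x])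

lemma deepInv_of_mem {x : FTerm} (hx : x ∉ adom I) {a : Atom} (ha : a ∈ I) :
    DeepInv M I x a where
  g _ h := absurd (mem_adom ha (by simp [h])) hx
  r _ _ h := absurd (mem_adom ha (by simp [h])) hx
  t _ _ _ h := absurd (mem_adom ha (by simp [h])) hx
  not_flood h := hx (mem_adom ha (by simp [h]))
  not_s _ h := hx (mem_adom ha (by simp [h]))
  not_s0 _ h := hx (mem_adom ha (by simp [h]))

section DeepNull

variable {N Hst h : ℕ} {x : FTerm} {J : Set Atom}

lemma _root_.SPath.length_eq_gIter (hN : ∀ k, M.gIter k ≤ N)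
    (hH : CollidingHeightsLE M I Hst)
    (hx : HasHeight M I h x) (hB : N + Hst + 2 ≤ h) {k d : ℕ}
    (hp : SPath (chase M I) d x ((parent M)^[M.gIter k] x)) : d = M.gIter k := by
  have := hN k
  obtain ⟨h', hh', he, hle⟩ :=
    hp.exists_height_of_deep hH (hx.iterate_parent (by omega)) (by omega)
  obtain rfl := hh'.unique hx
  exact hx.iterate_parent_inj (by omega) (by omega) he.symm

lemma DeepInv.g_of_step (hN : ∀ k, M.gIter k ≤ N)
    (hH : CollidingHeightsLE M I Hst)
    (hx : HasHeight M I h x) (hB : N + Hst + 2 ≤ h) (hJ : J ⊆ chase M I)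
    (hinv : ∀ b ∈ J, DeepInv M I x b) {u : FTerm} (ha : Step M J (pG, [x, u])) :
    ∃ k, u = (parent M)^[M.gIter k] x := by
  rcases ha.pG_inv with hp | ⟨i, y, hG, hR, hT⟩ | hF
  · exact ⟨0, (hp.mono hJ).eq_iterate_parent hx (by have := hN 0; omega)⟩
  · obtain ⟨k, rfl⟩ := (hinv _ hG).g _ rfl
    obtain ⟨d, hdi, hd⟩ := (hinv _ hR).r i _ rfl
    obtain ⟨c, hcy, hcu⟩ := (hinv _ hT).t i _ u rfl
    have hsucc := M.gIter_succ_eq (SPath.length_eq_gIter hN hH hx hB hd ▸ hdi)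
      (SPath.length_eq_gIter hN hH hx hB hcy)
    exact ⟨k + 1, hsucc ▸ hcu.eq_iterate_parent hx (by have := hN (k + 1); omega)⟩
  · exact absurd rfl (hinv _ hF).not_flood

lemma DeepInv.r_of_step (hJ : J ⊆ chase M I) (hinv : ∀ b ∈ J, DeepInv M I x b) {i : ℕ}
    {u : FTerm} (ha : Step M J (pR i, [x, u])) :
    ∃ d, d % M.p = i ∧ SPath (chase M I) d x u := by
  rcases ha.pR_inv with ⟨i', y, rfl, hR, hS⟩ | hF | ⟨rfl, rfl⟩
  · obtain ⟨d, rfl, hd⟩ := (hinv _ hR).r _ _ rfl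
    exact ⟨d + 1, by simp [Nat.add_mod], hd.append ⟨u, hJ hS, rfl⟩⟩
  · exact absurd rfl (hinv _ hF).not_flood
  · exact ⟨0, Nat.zero_mod _, rfl⟩

lemma DeepInv.t_of_step (hJ : J ⊆ chase M I) (hinv : ∀ b ∈ J, DeepInv M I x b) {i : ℕ}
    {u v : FTerm} (ha : Step M J (pT i, [x, u, v])) :
    ∃ c, SPath (chase M I) (c * M.ri i) x u ∧ SPath (chase M I) (c * M.qi i) x v := by
  rcases ha.pT_inv with ⟨y, z, hT, hy, hz⟩ | hF | ⟨rfl, rfl⟩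
  · obtain ⟨c, hcy, hcz⟩ := (hinv _ hT).t _ _ _ rfl
    exact ⟨c + 1, by rw [Nat.succ_mul]; exact hcy.append (hy.mono hJ),
      by rw [Nat.succ_mul]; exact hcz.append (hz.mono hJ)⟩
  · exact absurd rfl (hinv _ hF).not_flood
  · exact ⟨0, by rw [zero_mul]; rfl, by rw [zero_mul]; rfl⟩

lemma DeepInv.of_step (hN : ∀ k, M.gIter k ≤ N)
    (hH : CollidingHeightsLE M I Hst)
    (hx : HasHeight M I h x) (hB : N + Hst + 2 ≤ h) (hJ : J ⊆ chase M I)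
    (hinv : ∀ b ∈ J, DeepInv M I x b) {a : Atom} (ha : Step M J a) : DeepInv M I x a where
  g _ he := DeepInv.g_of_step hN hH hx hB hJ hinv (he ▸ ha)
  r _ _ he := DeepInv.r_of_step hJ hinv (he ▸ ha)
  t _ _ _ he := DeepInv.t_of_step hJ hinv (he ▸ ha)
  not_flood he := by
    obtain ⟨w, hS⟩ := (he ▸ ha).pFlood_inv
    exact (hinv _ hS).not_s w rfl
  not_s w he := by
    rcases (he ▸ ha).pS_inv with hS0 | ⟨rfl, hE⟩
    · exact (hinv _ hS0).not_s0 w rfl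
    · exact hx.not_mem_adom (by omega) (mem_adom (mem_chase_pEnd (hJ hE)) (by simp))
  not_s0 w he := by
    obtain ⟨z, -, hG, hE⟩ := (he ▸ ha).pS0_inv
    obtain ⟨k, rfl⟩ := (hinv _ hG).g z rfl
    have hz : (parent M)^[M.gIter k] x ∈ adom I := mem_adom (mem_chase_pEnd (hJ hE)) (by simp)
    have := hN k
    exact (hx.iterate_parent (j := M.gIter k) (by omega)).not_mem_adom (by omega) hz

lemma deepInv_of_mem_chase (hN : ∀ k, M.gIter k ≤ N)
    (hH : CollidingHeightsLE M I Hst)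
    (hx : HasHeight M I h x) (hB : N + Hst + 2 ≤ h) {a : Atom} (ha : a ∈ chase M I) :
    DeepInv M I x a :=
  chase_induction (fun _ hb => deepInv_of_mem (hx.not_mem_adom (by omega)) hb)
    (fun _ hb => DeepInv.of_step hN hH hx hB (fun _ hc => hc.1) (fun _ hc => hc.2) hb) a ha

lemma height_lt_of_pG_pEnd (hN : ∀ k, M.gIter k ≤ N)
    (hH : CollidingHeightsLE M I Hst) {y z : FTerm}
    (hG : (pG, [y, z]) ∈ chase M I) (hE : (pEnd, [z]) ∈ I) (hy : HasHeight M I h y) :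
    h < N + Hst + 2 := by
  by_contra hB
  obtain ⟨k, rfl⟩ := (deepInv_of_mem_chase hN hH hy (by omega) hG).g z rfl
  have hz : (parent M)^[M.gIter k] y ∈ adom I := mem_adom hE (by simp)
  have := hN k
  exact (hy.iterate_parent (j := M.gIter k) (by omega)).not_mem_adom (by omega) hz

end DeepNull

lemma exists_hasHeight_of_mem_chase {a : Atom} (ha : a ∈ chase M I) {u : FTerm}
    (hu : u ∈ a.2) : ∃ h, HasHeight M I h u := by
  refine chase_induction (P := fun a => ∀ u ∈ a.2, ∃ h, HasHeight M I h u)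
    (fun a ha u hu => ⟨0, mem_adom ha hu⟩) (fun a ha u hu => ?_) a ha u hu
  rcases ha.mem_args hu with ⟨b, hb, hub⟩ | ⟨y, z, rfl, hG, hE⟩
  · exact hb.2 u hub
  · by_cases hI : freshNull M y z ∈ adom I
    · exact ⟨0, hI⟩
    · obtain ⟨h, hy⟩ := hG.2 y (by simp)
      exact ⟨h + 1, hI, y, z, rfl, hG.1, mem_chase_pEnd hE.1, hy⟩

lemma exists_collidingHeightsLE (hI : (adom I).Finite) : ∃ Hst, CollidingHeightsLE M I Hst := by
  have hfin : (⋃ u ∈ adom I, {k | HasHeight M I k (parent M u)}).Finite :=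
    hI.biUnion fun u _ => Set.Subsingleton.finite fun _ hk _ hk' => hk.unique hk'
  obtain ⟨Hst, hHst⟩ := hfin.bddAbove
  exact ⟨Hst, fun v z k hvz hk => hHst (Set.mem_biUnion hvz (by rwa [parent_freshNull]))⟩

lemma finite_setOf_hasHeight (hI : (adom I).Finite) (h : ℕ) :
    {u | HasHeight M I h u}.Finite := by
  induction h with
  | zero => exact hI
  | succ h ih =>
    refine ((ih.prod hI).image fun p => freshNull M p.1 p.2).subset ?_
    rintro u ⟨-, y, z, rfl, -, hE, hy⟩
    exact ⟨(y, z), ⟨hy, mem_adom hE (by simp)⟩, rfl⟩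

lemma adom_chase_finite (hM : M.Halts) (hI : I.Finite) : (adom (chase M I)).Finite := by
  obtain ⟨N, hN⟩ := M.gIter_bddAbove hM
  have hIa := adom_finite hI
  obtain ⟨Hst, hH⟩ := exists_collidingHeightsLE (M := M) hIa
  refine ((Set.finite_Iic (N + Hst + 2)).biUnion
    fun h _ => finite_setOf_hasHeight (M := M) hIa h).subset ?_
  rintro u ⟨a, ha, hu⟩
  obtain ⟨h, hh⟩ := exists_hasHeight_of_mem_chase ha hu
  refine Set.mem_biUnion (x := h) ?_ hh
  cases h with
  | zero => simp
  | succ h =>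
    obtain ⟨-, y, z, -, hG, hE, hy⟩ := hh
    exact Nat.succ_le_of_lt (height_lt_of_pG_pEnd (fun k => hN ⟨k, rfl⟩) hH hG hE hy)

lemma chase_finite (hM : M.Halts) (hI : I.Finite) : (chase M I).Finite := by
  refine (hI.union ((Set.finite_Iio (7 + 2 * M.p)).prod
    (finite_setOf_length_le_forall_mem (adom_chase_finite hM hI) 3))).subset fun a ha => ?_
  rcases mem_chase_iff.1 ha with h | h
  · exact Or.inl h
  · exact Or.inr ⟨h.shape.1, h.shape.2, fun u hu => mem_adom ha hu⟩

end RM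

theorem stmt_6_general (M : TCM) (hM : M.Halts) (I : Finset Atom)
    (D : Deriv (RM M) (I : Set Atom)) :
    D.Finite :=
  D.finite_of_closed (RM.chase_finite hM I.finite_toSet) RM.subset_chase fun _ => RM.chase_closed

/-- if `M` halts, every fair `X`-derivation from `⟨R_M, I⟩` is finite,
for every instance `I` and every chase variant `X`. -/
theorem stmt_6 (M : TCM) (hM : M.Halts) (X : ChaseVariant) (I : Finset Atom)
    (D : Deriv (RM M) (I : Set Atom)) (hX : D.IsX X) (hfair : D.Fair X) :
    D.Finite :=
  stmt_6_general M hM I D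

end
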